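/- arXiv:2201.06169 — 3 statements merged into one kernel-verified Lean document; each statement's English description precedes it below -/
import Mathlib

section
/- Let S and A be measurable spaces, X = S × A, π a Markov kernel from S to A, q a Markov kernel from X to S, and 0 ≤ γ < 1. Then for any two bounded measurable functions Q and Q^π on X, writing D = Q − Q^π, the following chain of inequalities holds: (1/(1+γ))·sup_{(s,a,s')}|h^π(D)(s,a,s')| ≤ sup_{(s,a)}|D(s,a)| ≤ (1/(1−γ))·sup_{(s,a)}|(T h^π(D))(s,a)| ≤ (1/(1−γ))·sup_{(s,a,s')}|h^π(D)(s,a,s')|. -/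
open MeasureTheory ProbabilityTheory
open scoped ENNReal

/-- Sup-norm well-posedness of the NPIV formulation of `Q`-function
estimation (Lemma 1 of the paper).  For measurable spaces `S`, `A`, a Markov kernel
`π` from `S` to `A`, a Markov kernel `q` from `S × A` to `S`, a discount factor
`0 ≤ γ < 1`, and bounded measurable functions `Q`, `Qπ` on `S × A`, writing
`D = Q − Qπ`, `(MπD)(s') = ∫ D(s',a') π(da'|s')`,
`hπ(D)(s,a,s') = D(s,a) − γ (MπD)(s')` and
`(T hπ(D))(s,a) = D(s,a) − γ ∫ (MπD)(s') q(ds'|s,a)`, we have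
`(1/(1+γ)) ⬝ ‖hπ(D)‖∞ ≤ ‖D‖∞ ≤ (1/(1−γ)) ⬝ ‖T hπ(D)‖∞ ≤ (1/(1−γ)) ⬝ ‖hπ(D)‖∞`. -/
theorem sup_norm_well_posedness
    {S A : Type*} [MeasurableSpace S] [MeasurableSpace A]
    (π : Kernel S A) [IsMarkovKernel π]
    (q : Kernel (S × A) S) [IsMarkovKernel q]
    (γ : ℝ) (hγ0 : 0 ≤ γ) (hγ1 : γ < 1)
    (Q Qpi : S × A → ℝ) (hQm : Measurable Q) (hQpim : Measurable Qpi)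
    (hQb : ∃ C, ∀ x, |Q x| ≤ C) (hQpib : ∃ C, ∀ x, |Qpi x| ≤ C) :
    (1 / (1 + γ)) *
        (⨆ z : (S × A) × S,
          |(Q z.1 - Qpi z.1) - γ * ∫ a', (Q (z.2, a') - Qpi (z.2, a')) ∂(π z.2)|) ≤
      (⨆ x : S × A, |Q x - Qpi x|) ∧
    (⨆ x : S × A, |Q x - Qpi x|) ≤
      (1 / (1 - γ)) *
        (⨆ x : S × A,
          |(Q x - Qpi x) -
            γ * ∫ s', (∫ a', (Q (s', a') - Qpi (s', a')) ∂(π s')) ∂(q x)|) ∧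
    (1 / (1 - γ)) *
        (⨆ x : S × A,
          |(Q x - Qpi x) -
            γ * ∫ s', (∫ a', (Q (s', a') - Qpi (s', a')) ∂(π s')) ∂(q x)|) ≤
      (1 / (1 - γ)) *
        (⨆ z : (S × A) × S,
          |(Q z.1 - Qpi z.1) - γ * ∫ a', (Q (z.2, a') - Qpi (z.2, a')) ∂(π z.2)|) := by
  obtain ⟨C1, hC1⟩ := hQb
  obtain ⟨C2, hC2⟩ := hQpib
  set D : S × A → ℝ := fun x => Q x - Qpi x with hDdef
  have hDm : Measurable D := hQm.sub hQpim
  set C : ℝ := C1 + C2 with hCdef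
  have hC : ∀ x, |D x| ≤ C := fun x => by
    have := abs_sub (Q x) (Qpi x)
    calc |D x| = |Q x - Qpi x| := rfl
    _ ≤ |Q x| + |Qpi x| := abs_sub _ _
    _ ≤ C := add_le_add (hC1 x) (hC2 x)
  have hγγ : (0:ℝ) < 1 + γ := by linarith
  have hγγ' : (0:ℝ) < 1 - γ := by linarith
  rcases isEmpty_or_nonempty S with hS | hS
  · haveI : IsEmpty (S × A) := inferInstance
    haveI : IsEmpty ((S × A) × S) := inferInstance
    simp
  · obtain ⟨s₀⟩ := hS
    haveI : Nonempty A := by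
      by_contra h
      rw [not_nonempty_iff] at h
      have h1 : (π s₀) Set.univ = 1 := measure_univ
      rw [Set.univ_eq_empty_iff.2 h, measure_empty] at h1
      exact zero_ne_one h1
    obtain ⟨a₀⟩ := (inferInstance : Nonempty A)
    haveI : Nonempty S := ⟨s₀⟩
    have hC0 : 0 ≤ C := (abs_nonneg _).trans (hC (s₀, a₀))
    -- M : sup of |D|
    have bddD : BddAbove (Set.range fun x : S × A => |D x|) :=
      ⟨C, by rintro _ ⟨x, rfl⟩; exact hC x⟩
    set M : ℝ := ⨆ x : S × A, |D x| with hMdef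
    have hMle : ∀ x, |D x| ≤ M := fun x => le_ciSup bddD x
    have hM0 : 0 ≤ M := (abs_nonneg _).trans (hMle (s₀, a₀))
    -- integrability in a'
    have hDint : ∀ s', Integrable (fun a' => D (s', a')) (π s') := fun s' =>
      (integrable_const C).mono' (hDm.comp measurable_prodMk_left).aestronglyMeasurable
        (Filter.Eventually.of_forall fun a => by simpa using hC (s', a))
    -- Mπ bound
    have hMπ_le : ∀ s' : S, |∫ a', D (s', a') ∂π s'| ≤ M := fun s' => by
      have := norm_integral_le_of_norm_le_const (μ := π s') (C := M)
        (f := fun a' => D (s', a'))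
        (Filter.Eventually.of_forall fun a => by simpa using hMle (s', a))
      simpa using this
    -- Mπ measurable
    have hMπm : Measurable fun s' => ∫ a', D (s', a') ∂π s' :=
      (MeasureTheory.StronglyMeasurable.integral_kernel_prod_right'
        (κ := π) hDm.stronglyMeasurable).measurable
    have hMπint : ∀ x : S × A, Integrable (fun s' => ∫ a', D (s', a') ∂π s') (q x) :=
      fun x => (integrable_const M).mono' hMπm.aestronglyMeasurable
        (Filter.Eventually.of_forall fun s' => by simpa using hMπ_le s')
    have hIq : ∀ x : S × A, |∫ s', (∫ a', D (s', a') ∂π s') ∂q x| ≤ M := fun x => by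
      have := norm_integral_le_of_norm_le_const (μ := q x) (C := M)
        (f := fun s' => ∫ a', D (s', a') ∂π s')
        (Filter.Eventually.of_forall fun s' => by simpa using hMπ_le s')
      simpa using this
    -- h bound
    have hh : ∀ z : (S × A) × S, |D z.1 - γ * ∫ a', D (z.2, a') ∂π z.2| ≤ (1 + γ) * M :=
      fun z => by
        have h1 : |D z.1 - γ * ∫ a', D (z.2, a') ∂π z.2|
            ≤ |D z.1| + |γ * ∫ a', D (z.2, a') ∂π z.2| := abs_sub _ _
        have h2 : |γ * ∫ a', D (z.2, a') ∂π z.2| = γ * |∫ a', D (z.2, a') ∂π z.2| := by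
          rw [abs_mul, abs_of_nonneg hγ0]
        have h3 := hMπ_le z.2
        have h4 := hMle z.1
        nlinarith
    have bddh : BddAbove (Set.range fun z : (S × A) × S =>
        |D z.1 - γ * ∫ a', D (z.2, a') ∂π z.2|) :=
      ⟨(1 + γ) * M, by rintro _ ⟨z, rfl⟩; exact hh z⟩
    set H : ℝ := ⨆ z : (S × A) × S, |D z.1 - γ * ∫ a', D (z.2, a') ∂π z.2| with hHdef
    have hH_le : H ≤ (1 + γ) * M := ciSup_le hh
    have hle_H : ∀ z : (S × A) × S, |D z.1 - γ * ∫ a', D (z.2, a') ∂π z.2| ≤ H :=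
      fun z => le_ciSup bddh z
    -- T
    have hTbd : ∀ x : S × A,
        |D x - γ * ∫ s', (∫ a', D (s', a') ∂π s') ∂q x| ≤ M + γ * M := fun x => by
      have h1 : |D x - γ * ∫ s', (∫ a', D (s', a') ∂π s') ∂q x|
          ≤ |D x| + |γ * ∫ s', (∫ a', D (s', a') ∂π s') ∂q x| := abs_sub _ _
      have h2 : |γ * ∫ s', (∫ a', D (s', a') ∂π s') ∂q x|
          = γ * |∫ s', (∫ a', D (s', a') ∂π s') ∂q x| := by
        rw [abs_mul, abs_of_nonneg hγ0]
      have h3 := hIq x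
      have h4 := hMle x
      nlinarith
    have bddT : BddAbove (Set.range fun x : S × A =>
        |D x - γ * ∫ s', (∫ a', D (s', a') ∂π s') ∂q x|) :=
      ⟨M + γ * M, by rintro _ ⟨x, rfl⟩; exact hTbd x⟩
    set Tn : ℝ := ⨆ x : S × A,
      |D x - γ * ∫ s', (∫ a', D (s', a') ∂π s') ∂q x| with hTdef
    have hle_T : ∀ x, |D x - γ * ∫ s', (∫ a', D (s', a') ∂π s') ∂q x| ≤ Tn :=
      fun x => le_ciSup bddT x
    -- T x as an integral of h, bounded by H
    have hT_le_H : Tn ≤ H := by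
      refine ciSup_le fun x => ?_
      have heq : D x - γ * ∫ s', (∫ a', D (s', a') ∂π s') ∂q x
          = ∫ s', (D x - γ * ∫ a', D (s', a') ∂π s') ∂q x := by
        rw [integral_sub (integrable_const _) ((hMπint x).const_mul γ),
          integral_const, integral_const_mul]
        simp
      rw [heq]
      have := norm_integral_le_of_norm_le_const (μ := q x) (C := H)
        (f := fun s' => D x - γ * ∫ a', D (s', a') ∂π s')
        (Filter.Eventually.of_forall fun s' => by simpa using hle_H (x, s'))
      simpa using this
    -- second inequality core: M ≤ Tn + γ*M
    have hM_le : M ≤ Tn + γ * M := by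
      refine ciSup_le fun x => ?_
      have h1 := hle_T x
      have h2 := hIq x
      have h3 : |D x| ≤ |D x - γ * ∫ s', (∫ a', D (s', a') ∂π s') ∂q x|
          + γ * |∫ s', (∫ a', D (s', a') ∂π s') ∂q x| := by
        have := abs_add_le (D x - γ * ∫ s', (∫ a', D (s', a') ∂π s') ∂q x)
          (γ * ∫ s', (∫ a', D (s', a') ∂π s') ∂q x)
        rw [sub_add_cancel] at this
        calc |D x| ≤ _ := this
        _ ≤ _ := by rw [abs_mul, abs_of_nonneg hγ0]
      nlinarith
    have hH0 : 0 ≤ H := (abs_nonneg _).trans (hle_H ((s₀, a₀), s₀))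
    refine ⟨?_, ?_, ?_⟩
    · rw [div_mul_eq_mul_div, one_mul, div_le_iff₀ hγγ]
      nlinarith
    · rw [div_mul_eq_mul_div, one_mul, le_div_iff₀ hγγ']
      nlinarith
    · rw [div_mul_eq_mul_div, div_mul_eq_mul_div, one_mul, one_mul,
        div_le_div_iff₀ hγγ' hγγ']
      nlinarith
end

section
/- Under the stated density assumptions, for any 0 ≤ γ < 1 and any two functions Q₁, Q₂ ∈ L²(μ), the following inequalities hold: √(p_min/p_max) · (1−γ) · ‖Q₁ − Q₂‖_{L²(μ)} ≤ ‖T h^π(Q₁ − Q₂)‖_{L²(μ)} ≤ ‖h^π(Q₁ − Q₂)‖_{L²(μ⊗q)}. -/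
open MeasureTheory ProbabilityTheory Filter
open scoped ENNReal Topology
open scoped ENNReal

section Aux

variable {X : Type*} [MeasurableSpace X]

lemma eLpNorm_two_eq (m : Measure X) (h : X → ℝ) :
    eLpNorm h 2 m = (∫⁻ z, (‖h z‖₊ : ℝ≥0∞) ^ 2 ∂m) ^ (1/2 : ℝ) := by
  rw [eLpNorm_eq_lintegral_rpow_enorm_toReal two_ne_zero ENNReal.ofNat_ne_top]
  simp_rw [show ((2:ℝ≥0∞).toReal) = ((2:ℕ):ℝ) by norm_num, ENNReal.rpow_natCast]
  norm_num
  rfl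

lemma lint_sq_le (m : Measure X) [IsProbabilityMeasure m] {u : X → ℝ≥0∞}
    (hu : AEMeasurable u m) :
    (∫⁻ x, u x ∂m) ^ 2 ≤ ∫⁻ x, u x ^ 2 ∂m := by
  have hpq : Real.HolderConjugate 2 2 := Real.HolderConjugate.two_two
  have h := ENNReal.lintegral_mul_le_Lp_mul_Lq m hpq hu (aemeasurable_const (b := (1:ℝ≥0∞)))
  simp only [Pi.mul_apply, mul_one, ENNReal.one_rpow, lintegral_one, measure_univ,
    ENNReal.one_rpow] at h
  have h2 : (∫⁻ x, u x ∂m) ≤ (∫⁻ x, u x ^ (2:ℝ) ∂m) ^ (1/2 : ℝ) := by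
    simpa using h
  calc (∫⁻ x, u x ∂m) ^ 2 ≤ ((∫⁻ x, u x ^ (2:ℝ) ∂m) ^ (1/2 : ℝ)) ^ 2 := by
        exact pow_le_pow_left' h2 2
    _ = ∫⁻ x, u x ^ 2 ∂m := by
        rw [← ENNReal.rpow_natCast (((∫⁻ x, u x ^ (2:ℝ) ∂m) ^ (1/2 : ℝ))) 2,
          ← ENNReal.rpow_mul]
        rw [show (1/2 : ℝ) * ((2:ℕ):ℝ) = 1 by norm_num, ENNReal.rpow_one]
        simp_rw [show (2:ℝ) = ((2:ℕ):ℝ) by norm_num, ENNReal.rpow_natCast]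

lemma sq_nnnorm_integral_le (m : Measure X) [IsProbabilityMeasure m] {h : X → ℝ}
    (hm : AEMeasurable (fun x => (‖h x‖₊ : ℝ≥0∞)) m) :
    (‖∫ x, h x ∂m‖₊ : ℝ≥0∞) ^ 2 ≤ ∫⁻ x, (‖h x‖₊ : ℝ≥0∞) ^ 2 ∂m := by
  calc (‖∫ x, h x ∂m‖₊ : ℝ≥0∞) ^ 2 ≤ (∫⁻ x, (‖h x‖₊ : ℝ≥0∞) ∂m) ^ 2 := by
        exact pow_le_pow_left' (enorm_integral_le_lintegral_enorm _) 2
    _ ≤ _ := lint_sq_le m hm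

lemma integrable_of_sq_lintegral_ne_top (m : Measure X) [IsProbabilityMeasure m] {h : X → ℝ}
    (hsm : AEStronglyMeasurable h m)
    (hfin : ∫⁻ x, (‖h x‖₊ : ℝ≥0∞) ^ 2 ∂m ≠ ∞) : Integrable h m := by
  have hmem : MemLp h 2 m := by
    refine ⟨hsm, ?_⟩
    rw [eLpNorm_two_eq]
    exact ENNReal.rpow_lt_top_of_nonneg (by norm_num) hfin
  exact hmem.integrable one_le_two

end Aux

section Aux2
variable {α β γ : Type*} [MeasurableSpace α] [MeasurableSpace β] [MeasurableSpace γ]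

lemma integral_kernel_comp (η : Kernel β γ) [IsSFiniteKernel η] (κ : Kernel α β)
    [IsSFiniteKernel κ] (a : α) {g : γ → ℝ} (hg : StronglyMeasurable g)
    (hint : Integrable g ((η ∘ₖ κ) a)) :
    ∫ c, g c ∂(η ∘ₖ κ) a = ∫ b, ∫ c, g c ∂η b ∂κ a := by
  have hmap : ((κ ⊗ₖ Kernel.prodMkLeft α η) a).map Prod.snd = (η ∘ₖ κ) a := by
    rw [Kernel.comp_eq_snd_compProd, Kernel.snd_apply]
  have hint2 : Integrable (fun x : β × γ => g x.2) ((κ ⊗ₖ Kernel.prodMkLeft α η) a) := by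
    rw [← hmap] at hint
    exact hint.comp_measurable measurable_snd
  have := ProbabilityTheory.integral_compProd (κ := κ) (η := Kernel.prodMkLeft α η) (a := a)
    (f := fun x : β × γ => g x.2) hint2
  simp only [Kernel.prodMkLeft_apply] at this
  rw [← this, ← hmap, integral_map measurable_snd.aemeasurable]
  exact hg.aestronglyMeasurable
end Aux2

section Aux3
variable {X : Type*} [MeasurableSpace X]

/-- Iterates of a kernel. -/
noncomputable def kiter (κ : Kernel X X) : ℕ → Kernel X X
  | 0 => Kernel.id
  | (n+1) => κ ∘ₖ kiter κ n

lemma kiter_markov (κ : Kernel X X) [IsMarkovKernel κ] (n : ℕ) :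
    IsMarkovKernel (kiter κ n) := by
  induction n with
  | zero => exact inferInstanceAs (IsMarkovKernel (Kernel.id : Kernel X X))
  | succ n ih => haveI := ih; exact inferInstanceAs (IsMarkovKernel (κ ∘ₖ kiter κ n))

lemma kiter_le (κ : Kernel X X) [IsMarkovKernel κ] (ν : Measure X) (c : ℝ≥0∞)
    (hκd : ∀ z, κ z ≤ c • ν) (n : ℕ) (z : X) : kiter κ (n+1) z ≤ c • ν := by
  haveI := kiter_markov κ n
  rw [Measure.le_iff]
  intro s hs
  rw [show kiter κ (n+1) = κ ∘ₖ kiter κ n from rfl, Kernel.comp_apply,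
    Measure.bind_apply hs (Kernel.measurable κ).aemeasurable]
  calc ∫⁻ w, κ w s ∂(kiter κ n z) ≤ ∫⁻ _, (c • ν) s ∂(kiter κ n z) := by
        exact lintegral_mono fun w => (hκd w) s
    _ = (c • ν) s := by rw [lintegral_const, measure_univ, mul_one]

end Aux3

section Aux4
variable {X : Type*} [MeasurableSpace X]

lemma lint_mu_ge (ν : Measure X) {f : X → ℝ≥0∞} (hfm : Measurable f)
    (c : ℝ≥0∞) (hf : ∀ᵐ z ∂ν, c ≤ f z) {u : X → ℝ≥0∞} (hu : Measurable u) :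
    c * ∫⁻ z, u z ∂ν ≤ ∫⁻ z, u z ∂(ν.withDensity f) := by
  rw [lintegral_withDensity_eq_lintegral_mul ν hfm hu, ← lintegral_const_mul c hu]
  refine lintegral_mono_ae ?_
  filter_upwards [hf] with z hz
  exact mul_le_mul_left hz (u z)

lemma key_lint_bound (ν : Measure X) {f : X → ℝ≥0∞} (hfm : Measurable f)
    {μ : Measure X} [IsProbabilityMeasure μ] (hμ : μ = ν.withDensity f)
    {pmin pmax : ℝ} (hpmin : 0 < pmin)
    (hf : ∀ᵐ z ∂ν, ENNReal.ofReal pmin ≤ f z)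
    (κ : Kernel X X) [IsMarkovKernel κ] (hκd : ∀ z, κ z ≤ ENNReal.ofReal pmax • ν)
    {h : X → ℝ} (hm : Measurable h) :
    ∫⁻ z, (‖∫ y, h y ∂κ z‖₊ : ℝ≥0∞) ^ 2 ∂μ ≤
      (ENNReal.ofReal pmax / ENNReal.ofReal pmin) * ∫⁻ z, (‖h z‖₊ : ℝ≥0∞) ^ 2 ∂μ := by
  set u : X → ℝ≥0∞ := fun z => (‖h z‖₊ : ℝ≥0∞) ^ 2 with hu_def
  have hu : Measurable u := hm.enorm.pow_const 2
  have hstep1 : ∀ z, (‖∫ y, h y ∂κ z‖₊ : ℝ≥0∞) ^ 2 ≤ ENNReal.ofReal pmax * ∫⁻ y, u y ∂ν := by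
    intro z
    calc (‖∫ y, h y ∂κ z‖₊ : ℝ≥0∞) ^ 2 ≤ ∫⁻ y, u y ∂(κ z) :=
          sq_nnnorm_integral_le (κ z) hm.enorm.aemeasurable
      _ ≤ ∫⁻ y, u y ∂(ENNReal.ofReal pmax • ν) := lintegral_mono' (hκd z) le_rfl
      _ = ENNReal.ofReal pmax * ∫⁻ y, u y ∂ν := lintegral_smul_measure _ _
  have hν_le : ∫⁻ y, u y ∂ν ≤ (∫⁻ y, u y ∂μ) / ENNReal.ofReal pmin := by
    rw [ENNReal.le_div_iff_mul_le (Or.inl (by simp [hpmin])) (Or.inl ENNReal.ofReal_ne_top)]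
    rw [mul_comm, hμ]
    exact lint_mu_ge ν hfm _ hf hu
  calc ∫⁻ z, (‖∫ y, h y ∂κ z‖₊ : ℝ≥0∞) ^ 2 ∂μ
      ≤ ∫⁻ _, ENNReal.ofReal pmax * ∫⁻ y, u y ∂ν ∂μ := lintegral_mono hstep1
    _ = ENNReal.ofReal pmax * ∫⁻ y, u y ∂ν := by rw [lintegral_const, measure_univ, mul_one]
    _ ≤ ENNReal.ofReal pmax * ((∫⁻ y, u y ∂μ) / ENNReal.ofReal pmin) :=
        mul_le_mul_right hν_le _
    _ = (ENNReal.ofReal pmax / ENNReal.ofReal pmin) * ∫⁻ y, u y ∂μ := by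
        simp only [div_eq_mul_inv]
        ring

lemma key_eLp_bound (ν : Measure X) {f : X → ℝ≥0∞} (hfm : Measurable f)
    {μ : Measure X} [IsProbabilityMeasure μ] (hμ : μ = ν.withDensity f)
    {pmin pmax : ℝ} (hpmin : 0 < pmin)
    (hf : ∀ᵐ z ∂ν, ENNReal.ofReal pmin ≤ f z)
    (κ : Kernel X X) [IsMarkovKernel κ] (hκd : ∀ z, κ z ≤ ENNReal.ofReal pmax • ν)
    {h : X → ℝ} (hm : Measurable h) :
    eLpNorm (fun z => ∫ y, h y ∂κ z) 2 μ ≤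
      (ENNReal.ofReal pmax / ENNReal.ofReal pmin) ^ (1/2 : ℝ) * eLpNorm h 2 μ := by
  rw [eLpNorm_two_eq, eLpNorm_two_eq]
  calc (∫⁻ z, (‖∫ y, h y ∂κ z‖₊ : ℝ≥0∞) ^ 2 ∂μ) ^ (1/2 : ℝ)
      ≤ ((ENNReal.ofReal pmax / ENNReal.ofReal pmin) * ∫⁻ z, (‖h z‖₊ : ℝ≥0∞) ^ 2 ∂μ) ^ (1/2:ℝ) :=
        ENNReal.rpow_le_rpow (key_lint_bound ν hfm hμ hpmin hf κ hκd hm) (by norm_num)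
    _ = _ := ENNReal.mul_rpow_of_nonneg _ _ (by norm_num)

end Aux4

section AuxMain

variable {S A : Type*} [MeasurableSpace S] [MeasurableSpace A]

theorem L2_aux
    (π : Kernel S A) [IsMarkovKernel π]
    (q : Kernel (S × A) S) [IsMarkovKernel q]
    (γ : ℝ) (hγ0 : 0 ≤ γ) (hγ1 : γ < 1)
    (ν : Measure (S × A)) [SigmaFinite ν]
    (f : S × A → ℝ≥0∞) (hfm : Measurable f)
    (μ : Measure (S × A)) [IsProbabilityMeasure μ] (hμ : μ = ν.withDensity f)
    (pmin pmax : ℝ) (hpmin : 0 < pmin) (hpm : pmin ≤ pmax)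
    (hf : ∀ᵐ z ∂ν, ENNReal.ofReal pmin ≤ f z ∧ f z ≤ ENNReal.ofReal pmax)
    (κπ : Kernel (S × A) (S × A)) [IsMarkovKernel κπ]
    (hκπ : ∀ z, κπ z = (q z).bind (fun s' => (π s').map (fun a' => (s', a'))))
    (hκd : ∀ z, κπ z ≤ ENNReal.ofReal pmax • ν)
    (D : S × A → ℝ) (hDm : Measurable D) (hD : MemLp D 2 μ) :
    ENNReal.ofReal (Real.sqrt (pmin / pmax) * (1 - γ)) * eLpNorm D 2 μ ≤
      eLpNorm (fun z => D z - γ * ∫ y, D y ∂(κπ z)) 2 μ ∧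
    eLpNorm (fun z => D z - γ * ∫ y, D y ∂(κπ z)) 2 μ ≤
      eLpNorm (fun w : (S × A) × S => D w.1 - γ * ∫ a', D (w.2, a') ∂(π w.2)) 2 (μ ⊗ₘ q) := by
  have hDsm : StronglyMeasurable D := hDm.stronglyMeasurable
  have hpmax : (0:ℝ) < pmax := lt_of_lt_of_le hpmin hpm
  have hf1 : ∀ᵐ z ∂ν, ENNReal.ofReal pmin ≤ f z := hf.mono fun z hz => hz.1
  -- finiteness of second moments
  have hJμ : ∫⁻ z, (‖D z‖₊ : ℝ≥0∞) ^ 2 ∂μ ≠ ∞ := by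
    have h2 := hD.2
    rw [eLpNorm_two_eq] at h2
    exact ((ENNReal.rpow_lt_top_iff_of_pos (by norm_num : (0:ℝ) < 1/2)).mp h2).ne
  have hJν : ∫⁻ z, (‖D z‖₊ : ℝ≥0∞) ^ 2 ∂ν ≠ ∞ := by
    have hle := lint_mu_ge ν hfm (ENNReal.ofReal pmin) hf1 (u := fun z => (‖D z‖₊ : ℝ≥0∞) ^ 2) (hDm.enorm.pow_const 2)
    rw [← hμ] at hle
    intro htop
    rw [htop, ENNReal.mul_top (by simp [hpmin])] at hle
    exact hJμ (top_le_iff.mp hle)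
  have hbound : ∀ m : Measure (S × A), m ≤ ENNReal.ofReal pmax • ν →
      ∫⁻ z, (‖D z‖₊ : ℝ≥0∞) ^ 2 ∂m ≤ ENNReal.ofReal pmax * ∫⁻ z, (‖D z‖₊ : ℝ≥0∞) ^ 2 ∂ν :=
    fun m hm => (lintegral_mono' hm le_rfl).trans_eq (lintegral_smul_measure _ _)
  have hC_ne : ENNReal.ofReal pmax * ∫⁻ z, (‖D z‖₊ : ℝ≥0∞) ^ 2 ∂ν ≠ ∞ :=
    ENNReal.mul_ne_top ENNReal.ofReal_ne_top hJν
  have hDint : ∀ (m : Measure (S × A)) [IsProbabilityMeasure m],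
      m ≤ ENNReal.ofReal pmax • ν → Integrable D m := by
    intro m _ hm
    exact integrable_of_sq_lintegral_ne_top m hDsm.aestronglyMeasurable
      (ne_top_of_le_ne_top hC_ne (hbound m hm))
  -- the policy average and related identities
  set Mπ : S → ℝ := fun s' => ∫ a', D (s', a') ∂(π s') with hMπ_def
  have hMπsm : StronglyMeasurable Mπ :=
    StronglyMeasurable.integral_kernel_prod_right' (κ := π) hDsm
  set κ₂ : Kernel S (S × A) := Kernel.id ×ₖ π with hκ₂_def
  have hκ₂app : ∀ s', κ₂ s' = (π s').map (fun a' => (s', a')) := by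
    intro s'
    rw [hκ₂_def, Kernel.prod_apply, Kernel.id_apply, Measure.dirac_prod]
  have hcomp : ∀ z, κπ z = (κ₂ ∘ₖ q) z := by
    intro z
    rw [Kernel.comp_apply, hκπ z]
    congr 1
    exact (funext hκ₂app).symm
  have hlint_κπ : ∀ (z : S × A) (u : S × A → ℝ≥0∞), Measurable u →
      ∫⁻ y, u y ∂(κπ z) = ∫⁻ s', ∫⁻ a', u (s', a') ∂(π s') ∂(q z) := by
    intro z u hu
    rw [hcomp z, Kernel.lintegral_comp _ _ _ hu]
    refine lintegral_congr fun s' => ?_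
    rw [hκ₂app s', lintegral_map hu measurable_prodMk_left]
  have hMπ_sq : ∀ z, ∫⁻ s', (‖Mπ s'‖₊ : ℝ≥0∞) ^ 2 ∂(q z) ≤
      ENNReal.ofReal pmax * ∫⁻ y, (‖D y‖₊ : ℝ≥0∞) ^ 2 ∂ν := by
    intro z
    calc ∫⁻ s', (‖Mπ s'‖₊ : ℝ≥0∞) ^ 2 ∂(q z)
        ≤ ∫⁻ s', ∫⁻ a', (‖D (s', a')‖₊ : ℝ≥0∞) ^ 2 ∂(π s') ∂(q z) := by
          refine lintegral_mono fun s' => ?_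
          exact sq_nnnorm_integral_le (π s')
            ((hDm.comp measurable_prodMk_left).enorm.aemeasurable)
      _ = ∫⁻ y, (‖D y‖₊ : ℝ≥0∞) ^ 2 ∂(κπ z) :=
          (hlint_κπ z _ (hDm.enorm.pow_const 2)).symm
      _ ≤ _ := hbound (κπ z) (hκd z)
  have hMπ_int : ∀ z, Integrable Mπ (q z) := fun z =>
    integrable_of_sq_lintegral_ne_top (q z) hMπsm.aestronglyMeasurable
      (ne_top_of_le_ne_top hC_ne (hMπ_sq z))
  have hint_κπ : ∀ z, ∫ y, D y ∂(κπ z) = ∫ s', Mπ s' ∂(q z) := by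
    intro z
    rw [hcomp z, integral_kernel_comp κ₂ q z hDsm
      (by rw [← hcomp z]; exact hDint (κπ z) (hκd z))]
    refine integral_congr_ae (Filter.Eventually.of_forall fun s' => ?_)
    show (∫ c, D c ∂(κ₂ s')) = Mπ s'
    rw [hκ₂app s', integral_map measurable_prodMk_left.aemeasurable
      hDsm.aestronglyMeasurable]
  -- Part 2
  have part2 : eLpNorm (fun z => D z - γ * ∫ y, D y ∂(κπ z)) 2 μ ≤
      eLpNorm (fun w : (S × A) × S => D w.1 - γ * ∫ a', D (w.2, a') ∂(π w.2)) 2 (μ ⊗ₘ q) := by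
    have hHm : Measurable (fun w : (S × A) × S => D w.1 - γ * Mπ w.2) :=
      (hDm.comp measurable_fst).sub (measurable_const.mul (hMπsm.measurable.comp measurable_snd))
    have hgq : ∀ z, D z - γ * ∫ y, D y ∂(κπ z) = ∫ s', (D z - γ * Mπ s') ∂(q z) := by
      intro z
      rw [integral_sub (integrable_const _) ((hMπ_int z).const_mul γ),
        integral_const, probReal_univ, one_smul,
        integral_const_mul, hint_κπ z]
    have h2 : ∫⁻ z, (‖D z - γ * ∫ y, D y ∂(κπ z)‖₊ : ℝ≥0∞) ^ 2 ∂μ ≤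
        ∫⁻ w, (‖D w.1 - γ * Mπ w.2‖₊ : ℝ≥0∞) ^ 2 ∂(μ ⊗ₘ q) := by
      rw [Measure.lintegral_compProd (hHm.enorm.pow_const 2 : Measurable fun w => (‖D w.1 - γ * Mπ w.2‖₊ : ℝ≥0∞) ^ 2)]
      refine lintegral_mono fun z => ?_
      rw [hgq z]
      exact sq_nnnorm_integral_le (q z)
        ((measurable_const.sub (measurable_const.mul hMπsm.measurable)).enorm.aemeasurable)
    rw [eLpNorm_two_eq, eLpNorm_two_eq]
    exact ENNReal.rpow_le_rpow h2 (by norm_num)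
  refine ⟨?_, part2⟩
  -- Part 1
  set g : S × A → ℝ := fun z => D z - γ * ∫ y, D y ∂(κπ z) with hg_def
  have hPDsm : StronglyMeasurable (fun z => ∫ y, D y ∂(κπ z)) :=
    StronglyMeasurable.integral_kernel_prod_right' (κ := κπ)
      (hDsm.comp_measurable measurable_snd)
  have hgm : Measurable g := hDm.sub (measurable_const.mul hPDsm.measurable)
  have hgsm : StronglyMeasurable g := hgm.stronglyMeasurable
  -- the one-step image of D is a bounded function
  have hPD_sq : ∀ w, (‖∫ y, D y ∂(κπ w)‖₊ : ℝ≥0∞) ^ 2 ≤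
      ENNReal.ofReal pmax * ∫⁻ z, (‖D z‖₊ : ℝ≥0∞) ^ 2 ∂ν := fun w =>
    (sq_nnnorm_integral_le (κπ w) hDm.enorm.aemeasurable).trans (hbound (κπ w) (hκd w))
  have hPD_int : ∀ (m : Measure (S × A)) [IsProbabilityMeasure m],
      Integrable (fun z => ∫ y, D y ∂(κπ z)) m := by
    intro m _
    refine integrable_of_sq_lintegral_ne_top m hPDsm.aestronglyMeasurable ?_
    refine ne_top_of_le_ne_top hC_ne ?_
    calc ∫⁻ w, (‖∫ y, D y ∂(κπ w)‖₊ : ℝ≥0∞) ^ 2 ∂m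
        ≤ ∫⁻ _, ENNReal.ofReal pmax * ∫⁻ z, (‖D z‖₊ : ℝ≥0∞) ^ 2 ∂ν ∂m :=
          lintegral_mono hPD_sq
      _ = _ := by rw [lintegral_const, measure_univ, mul_one]
  have hg_int : ∀ (m : Measure (S × A)) [IsProbabilityMeasure m],
      Integrable D m → Integrable g m := by
    intro m _ hDi
    exact hDi.sub ((hPD_int m).const_mul γ)
  -- iterates
  have hkle : ∀ n z, kiter κπ (n+1) z ≤ ENNReal.ofReal pmax • ν := kiter_le κπ ν _ hκd
  have hDint_n : ∀ n z, Integrable D (kiter κπ (n+1) z) := by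
    intro n z
    haveI := kiter_markov κπ (n+1)
    exact hDint _ (hkle n z)
  set Dn : ℕ → (S × A) → ℝ := fun n z => ∫ y, D y ∂(kiter κπ n z) with hDn_def
  set Gn : ℕ → (S × A) → ℝ := fun n z => ∫ y, g y ∂(kiter κπ n z) with hGn_def
  have hDn0 : Dn 0 = D := by
    funext z
    show ∫ y, D y ∂((Kernel.id : Kernel (S × A) (S × A)) z) = D z
    rw [Kernel.id_apply, integral_dirac' _ _ hDsm]
  have hGn0 : Gn 0 = g := by
    funext z
    show ∫ y, g y ∂((Kernel.id : Kernel (S × A) (S × A)) z) = g z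
    rw [Kernel.id_apply, integral_dirac' _ _ hgsm]
  have hk1 : kiter κπ 1 = κπ := by
    show κπ ∘ₖ Kernel.id = κπ
    simp
  have hDnm : ∀ n, StronglyMeasurable (Dn n) := by
    intro n
    haveI := kiter_markov κπ n
    exact StronglyMeasurable.integral_kernel_prod_right' (κ := kiter κπ n)
      (hDsm.comp_measurable measurable_snd)
  have hGnm : ∀ n, StronglyMeasurable (Gn n) := by
    intro n
    haveI := kiter_markov κπ n
    exact StronglyMeasurable.integral_kernel_prod_right' (κ := kiter κπ n)
      (hgsm.comp_measurable measurable_snd)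
  -- recursion
  have hrec : ∀ n, Dn n = fun z => Gn n z + γ * Dn (n+1) z := by
    intro n
    funext z
    have key : Gn n z = Dn n z - γ * Dn (n+1) z := by
      cases n with
      | zero =>
        rw [hGn0, hDn0, hg_def]
        have : Dn 1 z = ∫ y, D y ∂(κπ z) := by show ∫ y, D y ∂(kiter κπ 1 z) = _; rw [hk1]
        rw [this]
      | succ n =>
        haveI := kiter_markov κπ (n+1)
        have hsub : Gn (n+1) z = Dn (n+1) z - γ * ∫ w, (∫ y, D y ∂(κπ w)) ∂(kiter κπ (n+1) z) := by
          show ∫ y, (D y - γ * ∫ y', D y' ∂(κπ y)) ∂(kiter κπ (n+1) z) = _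
          rw [integral_sub (hDint_n n z) ((hPD_int _).const_mul γ), integral_const_mul]
        have hcomp2 : ∫ w, (∫ y, D y ∂(κπ w)) ∂(kiter κπ (n+1) z) = Dn (n+2) z := by
          haveI := kiter_markov κπ (n+2)
          exact (integral_kernel_comp κπ (kiter κπ (n+1)) z hDsm (hDint_n (n+1) z)).symm
        rw [hsub, hcomp2]
    rw [key]
    ring
  -- L² bounds on the iterates
  set c : ℝ≥0∞ := (ENNReal.ofReal pmax / ENNReal.ofReal pmin) ^ (1/2 : ℝ) with hc_def
  have hc_ne_top : c ≠ ∞ := by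
    refine (ENNReal.rpow_lt_top_of_nonneg (by norm_num) ?_).ne
    exact (ENNReal.div_lt_top ENNReal.ofReal_ne_top (by simp [hpmin])).ne
  have hc1 : 1 ≤ c := by
    rw [hc_def, ← ENNReal.one_rpow (1/2 : ℝ)]
    refine ENNReal.rpow_le_rpow ?_ (by norm_num)
    rw [ENNReal.le_div_iff_mul_le (Or.inl (by simp [hpmin])) (Or.inl ENNReal.ofReal_ne_top),
      one_mul]
    exact ENNReal.ofReal_le_ofReal hpm
  have hA : ∀ n, eLpNorm (Dn (n+1)) 2 μ ≤ c * eLpNorm D 2 μ := by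
    intro n
    haveI := kiter_markov κπ (n+1)
    exact key_eLp_bound ν hfm hμ hpmin hf1 (kiter κπ (n+1)) (hkle n) hDm
  have hB : ∀ n, eLpNorm (Gn n) 2 μ ≤ c * eLpNorm g 2 μ := by
    intro n
    cases n with
    | zero => rw [hGn0]; exact le_mul_of_one_le_left (by positivity) hc1
    | succ n =>
      haveI := kiter_markov κπ (n+1)
      exact key_eLp_bound ν hfm hμ hpmin hf1 (kiter κπ (n+1)) (hkle n) hgm
  -- induction
  have hstep : ∀ n, eLpNorm (Dn n) 2 μ ≤
      eLpNorm (Gn n) 2 μ + ENNReal.ofReal γ * eLpNorm (Dn (n+1)) 2 μ := by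
    intro n
    rw [hrec n]
    refine (eLpNorm_add_le (hGnm n).aestronglyMeasurable
      ((measurable_const.mul (hDnm (n+1)).measurable)).aestronglyMeasurable one_le_two).trans ?_
    have : eLpNorm (fun z => γ * Dn (n+1) z) 2 μ = ENNReal.ofReal γ * eLpNorm (Dn (n+1)) 2 μ := by
      have h1 : (fun z => γ * Dn (n+1) z) = γ • (Dn (n+1)) := rfl
      rw [h1, eLpNorm_const_smul]
      simp [ENNReal.smul_def, Real.enorm_eq_ofReal hγ0]
    exact add_le_add_right this.le _
  have hiter : ∀ n, eLpNorm D 2 μ ≤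
      (∑ k ∈ Finset.range n, ENNReal.ofReal γ ^ k) * (c * eLpNorm g 2 μ) +
        ENNReal.ofReal γ ^ n * eLpNorm (Dn n) 2 μ := by
    intro n
    induction n with
    | zero => simp [hDn0]
    | succ n ih =>
      refine ih.trans ?_
      calc (∑ k ∈ Finset.range n, ENNReal.ofReal γ ^ k) * (c * eLpNorm g 2 μ) +
            ENNReal.ofReal γ ^ n * eLpNorm (Dn n) 2 μ
          ≤ (∑ k ∈ Finset.range n, ENNReal.ofReal γ ^ k) * (c * eLpNorm g 2 μ) +
            ENNReal.ofReal γ ^ n *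
              (c * eLpNorm g 2 μ + ENNReal.ofReal γ * eLpNorm (Dn (n+1)) 2 μ) := by
            refine add_le_add_right (mul_le_mul_right ((hstep n).trans ?_) _) _
            exact add_le_add_left (hB n) _
        _ = (∑ k ∈ Finset.range (n+1), ENNReal.ofReal γ ^ k) * (c * eLpNorm g 2 μ) +
            ENNReal.ofReal γ ^ (n+1) * eLpNorm (Dn (n+1)) 2 μ := by
            rw [Finset.sum_range_succ]
            ring
  -- pass to the limit
  have hgeo : ∀ n, (∑ k ∈ Finset.range n, ENNReal.ofReal γ ^ k) ≤ ENNReal.ofReal (1/(1-γ)) := by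
    intro n
    have h1γ : (0:ℝ) < 1 - γ := by linarith
    have hsum : (∑ k ∈ Finset.range n, γ ^ k) ≤ 1/(1-γ) := by
      rw [le_div_iff₀ h1γ]
      have hgs := geom_sum_mul γ n
      nlinarith [pow_nonneg hγ0 n]
    calc (∑ k ∈ Finset.range n, ENNReal.ofReal γ ^ k)
        = ENNReal.ofReal (∑ k ∈ Finset.range n, γ ^ k) := by
          rw [ENNReal.ofReal_sum_of_nonneg fun k _ => pow_nonneg hγ0 k]
          exact Finset.sum_congr rfl fun k _ => (ENNReal.ofReal_pow hγ0 k).symm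
      _ ≤ _ := ENNReal.ofReal_le_ofReal hsum
  have hlim_ineq : ∀ n, eLpNorm D 2 μ ≤
      ENNReal.ofReal (1/(1-γ)) * (c * eLpNorm g 2 μ) +
        ENNReal.ofReal γ ^ (n+1) * (c * eLpNorm D 2 μ) := by
    intro n
    refine (hiter (n+1)).trans ?_
    exact add_le_add (mul_le_mul_left (hgeo (n+1)) _) (mul_le_mul_right (hA n) _)
  have hKfin : c * eLpNorm D 2 μ ≠ ∞ := ENNReal.mul_ne_top hc_ne_top hD.2.ne
  have htend : Tendsto (fun n : ℕ => ENNReal.ofReal (1/(1-γ)) * (c * eLpNorm g 2 μ) +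
      ENNReal.ofReal γ ^ (n+1) * (c * eLpNorm D 2 μ)) atTop
      (𝓝 (ENNReal.ofReal (1/(1-γ)) * (c * eLpNorm g 2 μ))) := by
    have hγlt : ENNReal.ofReal γ < 1 := by
      rw [← ENNReal.ofReal_one]
      exact ENNReal.ofReal_lt_ofReal_iff_of_nonneg hγ0 |>.mpr hγ1
    have hpow : Tendsto (fun n : ℕ => ENNReal.ofReal γ ^ n) atTop (𝓝 0) :=
      ENNReal.tendsto_pow_atTop_nhds_zero_of_lt_one hγlt
    have hpow' : Tendsto (fun n : ℕ => ENNReal.ofReal γ ^ (n+1)) atTop (𝓝 0) :=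
      hpow.comp (tendsto_add_atTop_nat 1)
    have hmul : Tendsto (fun n : ℕ => ENNReal.ofReal γ ^ (n+1) * (c * eLpNorm D 2 μ)) atTop
        (𝓝 0) := by
      have := ENNReal.Tendsto.mul_const hpow' (Or.inr hKfin)
      simpa using this
    have := hmul.const_add (ENNReal.ofReal (1/(1-γ)) * (c * eLpNorm g 2 μ))
    simpa using this
  have hfinal : eLpNorm D 2 μ ≤ ENNReal.ofReal (1/(1-γ)) * (c * eLpNorm g 2 μ) :=
    ge_of_tendsto' htend hlim_ineq
  -- final algebra
  have hc_eq : c = ENNReal.ofReal (Real.sqrt (pmax/pmin)) := by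
    rw [hc_def, ← ENNReal.ofReal_div_of_pos hpmin,
      ENNReal.ofReal_rpow_of_nonneg (div_nonneg hpmax.le hpmin.le) (by norm_num : (0:ℝ) ≤ 1/2),
      Real.sqrt_eq_rpow]
  have hmul_le : ENNReal.ofReal (Real.sqrt (pmin/pmax) * (1-γ)) *
      (ENNReal.ofReal (1/(1-γ)) * c) ≤ 1 := by
    have h1γ : (0:ℝ) < 1 - γ := by linarith
    rw [hc_eq, ← ENNReal.ofReal_mul (one_div_nonneg.mpr h1γ.le),
      ← ENNReal.ofReal_mul (mul_nonneg (Real.sqrt_nonneg _) h1γ.le)]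
    refine le_of_eq ?_
    rw [show Real.sqrt (pmin/pmax) * (1-γ) * (1/(1-γ) * Real.sqrt (pmax/pmin)) = 1 from ?_,
      ENNReal.ofReal_one]
    have hsq : Real.sqrt (pmin/pmax) * Real.sqrt (pmax/pmin) = 1 := by
      rw [← Real.sqrt_mul (by positivity)]
      rw [show pmin/pmax * (pmax/pmin) = 1 by field_simp]
      exact Real.sqrt_one
    field_simp
    nlinarith [hsq]
  calc ENNReal.ofReal (Real.sqrt (pmin/pmax) * (1-γ)) * eLpNorm D 2 μ
      ≤ ENNReal.ofReal (Real.sqrt (pmin/pmax) * (1-γ)) *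
        (ENNReal.ofReal (1/(1-γ)) * (c * eLpNorm g 2 μ)) := mul_le_mul_right hfinal _
    _ = (ENNReal.ofReal (Real.sqrt (pmin/pmax) * (1-γ)) *
        (ENNReal.ofReal (1/(1-γ)) * c)) * eLpNorm g 2 μ := by ring
    _ ≤ 1 * eLpNorm g 2 μ := mul_le_mul_left hmul_le _
    _ = eLpNorm g 2 μ := one_mul _




end AuxMain

/-- ($L^2$ well-posedness, first part of Theorem 1 of the paper.)
`S`, `A` are measurable spaces, `X = S × A`, `π` a Markov kernel from `S` to `A`,
`q` a Markov kernel from `X` to `S`, `0 ≤ γ < 1`.  `ν` is a σ-finite reference measure on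
`X` and `μ` a probability measure with density `f` w.r.t. `ν` satisfying
`p_min ≤ f ≤ p_max` ν-a.e. (`0 < p_min ≤ p_max`).  `κπ` is the Markov kernel on `X`
obtained by first applying `q` and then drawing an action from `π`, and each `κπ z` has
density w.r.t. `ν` bounded by `p_max` (expressed as `κπ z ≤ p_max • ν`).  Then for any
`Q₁, Q₂ ∈ L²(μ)`,
`√(p_min/p_max)·(1−γ)·‖Q₁ − Q₂‖_{L²(μ)} ≤ ‖T hπ(Q₁ − Q₂)‖_{L²(μ)} ≤ ‖hπ(Q₁ − Q₂)‖_{L²(μ⊗q)}`,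
where `hπ(D)(s,a,s') = D(s,a) − γ ∫ D(s',a') π(da'|s')` and
`(T hπ(D))(z) = D(z) − γ ∫ D d(κπ z)`. -/
theorem L2_well_posedness
    {S A : Type*} [MeasurableSpace S] [MeasurableSpace A]
    (π : Kernel S A) [IsMarkovKernel π]
    (q : Kernel (S × A) S) [IsMarkovKernel q]
    (γ : ℝ) (hγ0 : 0 ≤ γ) (hγ1 : γ < 1)
    (ν : Measure (S × A)) [SigmaFinite ν]
    (f : S × A → ℝ≥0∞) (hfm : Measurable f)
    (μ : Measure (S × A)) [IsProbabilityMeasure μ] (hμ : μ = ν.withDensity f)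
    (pmin pmax : ℝ) (hpmin : 0 < pmin) (hpm : pmin ≤ pmax)
    (hf : ∀ᵐ z ∂ν, ENNReal.ofReal pmin ≤ f z ∧ f z ≤ ENNReal.ofReal pmax)
    (κπ : Kernel (S × A) (S × A)) [IsMarkovKernel κπ]
    (hκπ : ∀ z, κπ z = (q z).bind (fun s' => (π s').map (fun a' => (s', a'))))
    (hκd : ∀ z, κπ z ≤ ENNReal.ofReal pmax • ν)
    (Q₁ Q₂ : S × A → ℝ) (hQ₁m : Measurable Q₁) (hQ₂m : Measurable Q₂)
    (hQ₁ : MemLp Q₁ 2 μ) (hQ₂ : MemLp Q₂ 2 μ) :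
    ENNReal.ofReal (Real.sqrt (pmin / pmax) * (1 - γ)) *
        eLpNorm (fun z => Q₁ z - Q₂ z) 2 μ ≤
      eLpNorm (fun z => (Q₁ z - Q₂ z) - γ * ∫ y, (Q₁ y - Q₂ y) ∂(κπ z)) 2 μ ∧
    eLpNorm (fun z => (Q₁ z - Q₂ z) - γ * ∫ y, (Q₁ y - Q₂ y) ∂(κπ z)) 2 μ ≤
      eLpNorm
        (fun w : (S × A) × S =>
          (Q₁ w.1 - Q₂ w.1) - γ * ∫ a', (Q₁ (w.2, a') - Q₂ (w.2, a')) ∂(π w.2))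
        2 (μ ⊗ₘ q) := by
  exact L2_aux π q γ hγ0 hγ1 ν f hfm μ hμ pmin pmax hpmin hpm hf κπ hκπ hκd
    (fun z => Q₁ z - Q₂ z) (hQ₁m.sub hQ₂m) (hQ₁.sub hQ₂)
end

section
/- Under the stated density assumptions, for any 0 ≤ γ ≤ 1 and every Q ∈ L²(μ), ‖h^π(Q)‖²_{L²(μ⊗q)} ≤ 2(1 + γ² p_max/p_min) · ‖Q‖²_{L²(μ)}. -/
open MeasureTheory ProbabilityTheory
open scoped ENNReal

lemma sq_eLpNorm_two' {α : Type*} [MeasurableSpace α] (m : Measure α) (g : α → ℝ) :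
    (eLpNorm g 2 m) ^ 2 = ∫⁻ x, ENNReal.ofReal (g x ^ 2) ∂m := by
  rw [eLpNorm_eq_lintegral_rpow_enorm_toReal two_ne_zero ENNReal.ofNat_ne_top]
  rw [← ENNReal.rpow_natCast _ 2, ← ENNReal.rpow_mul]
  have h : ∀ x, ‖g x‖ₑ ^ ((2:ℝ≥0∞).toReal) = ENNReal.ofReal (g x ^ 2) := by
    intro x
    rw [Real.enorm_eq_ofReal_abs, ENNReal.toReal_ofNat,
      ENNReal.ofReal_rpow_of_nonneg (abs_nonneg _) (by norm_num)]
    congr 1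
    rw [show (2:ℝ) = ((2:ℕ):ℝ) by norm_num, Real.rpow_natCast, sq_abs]
  simp_rw [h]
  rw [ENNReal.toReal_ofNat]
  norm_num

lemma jensen_sq' {A : Type*} [MeasurableSpace A] (π : Measure A) [IsProbabilityMeasure π]
    (g : A → ℝ) (hg : Measurable g) :
    ENNReal.ofReal ((∫ a, g a ∂π) ^ 2) ≤ ∫⁻ a, ENNReal.ofReal (g a ^ 2) ∂π := by
  have hc : ∀ a, ENNReal.ofReal (g a ^ 2) = (‖g a‖₊ : ℝ≥0∞) ^ (2:ℝ) := by
    intro a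
    have h : g a ^ 2 = |g a| ^ (2:ℝ) := by
      rw [show (2:ℝ) = ((2:ℕ):ℝ) by norm_num, Real.rpow_natCast, sq_abs]
    rw [h, ← ENNReal.ofReal_rpow_of_nonneg (abs_nonneg _) (by norm_num),
      ← enorm_eq_nnnorm, Real.enorm_eq_ofReal_abs]
  have h1 : ENNReal.ofReal ((∫ a, g a ∂π) ^ 2) = (ENNReal.ofReal |∫ a, g a ∂π|) ^ 2 := by
    rw [← ENNReal.ofReal_pow (abs_nonneg _), sq_abs]
  have h2 : ENNReal.ofReal |∫ a, g a ∂π| ≤ ∫⁻ a, (‖g a‖₊ : ℝ≥0∞) ∂π := by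
    rw [← Real.enorm_eq_ofReal_abs]
    exact enorm_integral_le_lintegral_enorm _
  have hq2 : Real.conjExponent 2 = 2 := by
    rw [Real.conjExponent]; norm_num
  have hold := ENNReal.lintegral_mul_le_Lp_mul_Lq π (Real.HolderConjugate.conjExponent one_lt_two)
      (f := fun a => (‖g a‖₊ : ℝ≥0∞)) (g := fun _ => 1)
      hg.nnnorm.coe_nnreal_ennreal.aemeasurable aemeasurable_const
  rw [hq2] at hold
  simp only [Pi.mul_apply, mul_one, ENNReal.one_rpow, lintegral_one, measure_univ,
    ENNReal.one_rpow] at hold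
  have h3 : (∫⁻ a, (‖g a‖₊ : ℝ≥0∞) ∂π) ^ 2 ≤ ∫⁻ a, (‖g a‖₊ : ℝ≥0∞) ^ (2:ℝ) ∂π := by
    calc (∫⁻ a, (‖g a‖₊ : ℝ≥0∞) ∂π) ^ 2
        ≤ ((∫⁻ a, (‖g a‖₊ : ℝ≥0∞) ^ (2:ℝ) ∂π) ^ (1/2 : ℝ)) ^ 2 := pow_le_pow_left' hold 2
      _ = ∫⁻ a, (‖g a‖₊ : ℝ≥0∞) ^ (2:ℝ) ∂π := by
          rw [← ENNReal.rpow_natCast _ 2, ← ENNReal.rpow_mul]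
          norm_num
  simp_rw [hc]
  exact h1.trans_le ((pow_le_pow_left' h2 2).trans h3)

/-- (Forward bound used in the proof of Theorem 1 of the paper.)
Under the stated density assumptions, for any `0 ≤ γ ≤ 1` and every `Q ∈ L²(μ)`,
`‖hπ(Q)‖²_{L²(μ⊗q)} ≤ 2 (1 + γ² p_max/p_min) ‖Q‖²_{L²(μ)}`, where
`hπ(Q)(s,a,s') = Q(s,a) − γ ∫ Q(s',a') π(da'|s')`. -/
theorem hpi_L2_upper_bound
    {S A : Type*} [MeasurableSpace S] [MeasurableSpace A]
    (π : Kernel S A) [IsMarkovKernel π]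
    (q : Kernel (S × A) S) [IsMarkovKernel q]
    (γ : ℝ) (hγ0 : 0 ≤ γ) (hγ1 : γ ≤ 1)
    (ν : Measure (S × A)) [SigmaFinite ν]
    (f : S × A → ℝ≥0∞) (hfm : Measurable f)
    (μ : Measure (S × A)) [IsProbabilityMeasure μ] (hμ : μ = ν.withDensity f)
    (pmin pmax : ℝ) (hpmin : 0 < pmin) (hpm : pmin ≤ pmax)
    (hf : ∀ᵐ z ∂ν, ENNReal.ofReal pmin ≤ f z ∧ f z ≤ ENNReal.ofReal pmax)
    (κπ : Kernel (S × A) (S × A)) [IsMarkovKernel κπ]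
    (hκπ : ∀ z, κπ z = (q z).bind (fun s' => (π s').map (fun a' => (s', a'))))
    (hκd : ∀ z, κπ z ≤ ENNReal.ofReal pmax • ν)
    (Q : S × A → ℝ) (hQm : Measurable Q) (hQ : MemLp Q 2 μ) :
    (eLpNorm
        (fun w : (S × A) × S => Q w.1 - γ * ∫ a', Q (w.2, a') ∂(π w.2))
        2 (μ ⊗ₘ q)) ^ 2 ≤
      ENNReal.ofReal (2 * (1 + γ ^ 2 * pmax / pmin)) * (eLpNorm Q 2 μ) ^ 2 := by
  -- Notation
  set K : S → ℝ := fun s' => ∫ a', Q (s', a') ∂(π s') with hK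
  have hKm : Measurable K :=
    (hQm.stronglyMeasurable.integral_kernel_prod_right' (κ := π)).measurable
  set F : S × A → ℝ≥0∞ := fun z => ENNReal.ofReal (Q z ^ 2) with hF
  have hFm : Measurable F := (hQm.pow_const 2).ennreal_ofReal
  have hpmax : (0:ℝ) ≤ pmax := hpmin.le.trans hpm
  have hF1 : Measurable fun w : (S × A) × S => F w.1 := hFm.comp measurable_fst
  have hK2 : Measurable fun w : (S × A) × S => ENNReal.ofReal (K w.2 ^ 2) :=
    ((hKm.comp measurable_snd).pow_const 2).ennreal_ofReal
  -- rewrite both sides as lintegrals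
  rw [sq_eLpNorm_two', sq_eLpNorm_two']
  -- pointwise bound
  have hpt : ∀ w : (S × A) × S,
      ENNReal.ofReal ((Q w.1 - γ * K w.2) ^ 2) ≤
        ENNReal.ofReal 2 * F w.1 + ENNReal.ofReal (2 * γ ^ 2) * ENNReal.ofReal (K w.2 ^ 2) := by
    intro w
    have h1 : (Q w.1 - γ * K w.2) ^ 2 ≤ 2 * Q w.1 ^ 2 + 2 * γ ^ 2 * K w.2 ^ 2 := by
      nlinarith [sq_nonneg (Q w.1 + γ * K w.2)]
    calc ENNReal.ofReal ((Q w.1 - γ * K w.2) ^ 2)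
        ≤ ENNReal.ofReal (2 * Q w.1 ^ 2 + 2 * γ ^ 2 * K w.2 ^ 2) :=
          ENNReal.ofReal_le_ofReal h1
      _ = ENNReal.ofReal 2 * F w.1 + ENNReal.ofReal (2 * γ ^ 2) * ENNReal.ofReal (K w.2 ^ 2) := by
          rw [ENNReal.ofReal_add (by positivity) (by positivity),
            ENNReal.ofReal_mul (by norm_num), ENNReal.ofReal_mul (by positivity)]
  calc ∫⁻ w, ENNReal.ofReal ((Q w.1 - γ * K w.2) ^ 2) ∂(μ ⊗ₘ q)
      ≤ ∫⁻ w, (ENNReal.ofReal 2 * F w.1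
          + ENNReal.ofReal (2 * γ ^ 2) * ENNReal.ofReal (K w.2 ^ 2)) ∂(μ ⊗ₘ q) :=
        lintegral_mono hpt
    _ = ENNReal.ofReal 2 * ∫⁻ w : (S × A) × S, F w.1 ∂(μ ⊗ₘ q)
          + ENNReal.ofReal (2 * γ ^ 2) *
            ∫⁻ w : (S × A) × S, ENNReal.ofReal (K w.2 ^ 2) ∂(μ ⊗ₘ q) := by
        rw [lintegral_add_left (hF1.const_mul _),
          lintegral_const_mul _ hF1, lintegral_const_mul _ hK2]
    _ ≤ ENNReal.ofReal 2 * ∫⁻ z, F z ∂μ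
          + ENNReal.ofReal (2 * γ ^ 2) *
            (ENNReal.ofReal pmax * ∫⁻ z, F z ∂ν) := by
        gcongr
        · -- first marginal
          rw [Measure.lintegral_compProd hF1]
          apply le_of_eq
          simp [lintegral_const]
        · -- Jensen + kernel density bound
          rw [Measure.lintegral_compProd hK2]
          have hstep : ∀ z : S × A,
              ∫⁻ s', ENNReal.ofReal (K s' ^ 2) ∂(q z) ≤ ENNReal.ofReal pmax * ∫⁻ z', F z' ∂ν := by
            intro z
            have hjen : ∀ s', ENNReal.ofReal (K s' ^ 2) ≤ ∫⁻ a', F (s', a') ∂(π s') := by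
              intro s'
              exact jensen_sq' (π s') (fun a' => Q (s', a'))
                (hQm.comp measurable_prodMk_left)
            have hbind : ∫⁻ s', (∫⁻ a', F (s', a') ∂(π s')) ∂(q z) = ∫⁻ z', F z' ∂(κπ z) := by
              rw [hκπ z]
              have hmeas : Measurable (fun s' => ((π s').map (fun a' => (s', a')))) := by
                have : (fun s' => ((π s').map (fun a' => (s', a'))))
                    = fun s' => (Kernel.id ×ₖ π) s' := by
                  funext s'
                  rw [Kernel.prod_apply, Kernel.id_apply, Measure.dirac_prod]
                rw [this]
                exact (Kernel.id ×ₖ π).measurable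
              rw [Measure.lintegral_bind hmeas.aemeasurable hFm.aemeasurable]
              refine lintegral_congr fun s' => ?_
              rw [lintegral_map hFm measurable_prodMk_left]
            calc ∫⁻ s', ENNReal.ofReal (K s' ^ 2) ∂(q z)
                ≤ ∫⁻ s', (∫⁻ a', F (s', a') ∂(π s')) ∂(q z) := lintegral_mono hjen
              _ = ∫⁻ z', F z' ∂(κπ z) := hbind
              _ ≤ ∫⁻ z', F z' ∂(ENNReal.ofReal pmax • ν) := lintegral_mono' (hκd z) le_rfl
              _ = ENNReal.ofReal pmax * ∫⁻ z', F z' ∂ν := lintegral_smul_measure _ _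
          calc ∫⁻ z, (∫⁻ s', ENNReal.ofReal (K s' ^ 2) ∂(q z)) ∂μ
              ≤ ∫⁻ _, (ENNReal.ofReal pmax * ∫⁻ z', F z' ∂ν) ∂μ := lintegral_mono hstep
            _ = ENNReal.ofReal pmax * ∫⁻ z', F z' ∂ν := by simp
    _ ≤ ENNReal.ofReal (2 * (1 + γ ^ 2 * pmax / pmin)) * ∫⁻ z, F z ∂μ := by
        -- density lower bound: ∫ F dν ≤ pmin⁻¹ * ∫ F dμ
        have hlow : ENNReal.ofReal pmin * ∫⁻ z, F z ∂ν ≤ ∫⁻ z, F z ∂μ := by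
          rw [hμ, lintegral_withDensity_eq_lintegral_mul ν hfm hFm, ← lintegral_const_mul _ hFm]
          refine lintegral_mono_ae ?_
          filter_upwards [hf] with z hz
          exact mul_le_mul_left hz.1 _
        have hν : ∫⁻ z, F z ∂ν ≤ (ENNReal.ofReal pmin)⁻¹ * ∫⁻ z, F z ∂μ := by
          rw [← ENNReal.div_eq_inv_mul]
          rw [ENNReal.le_div_iff_mul_le (Or.inl ?_) (Or.inl ENNReal.ofReal_ne_top)]
          · rwa [mul_comm]
          · simp [ENNReal.ofReal_eq_zero, not_le, hpmin]
        calc ENNReal.ofReal 2 * ∫⁻ z, F z ∂μ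
              + ENNReal.ofReal (2 * γ ^ 2) * (ENNReal.ofReal pmax * ∫⁻ z, F z ∂ν)
            ≤ ENNReal.ofReal 2 * ∫⁻ z, F z ∂μ
              + ENNReal.ofReal (2 * γ ^ 2) * (ENNReal.ofReal pmax *
                ((ENNReal.ofReal pmin)⁻¹ * ∫⁻ z, F z ∂μ)) := by gcongr
          _ = (ENNReal.ofReal 2 + ENNReal.ofReal (2 * γ ^ 2) * ENNReal.ofReal pmax *
                (ENNReal.ofReal pmin)⁻¹) * ∫⁻ z, F z ∂μ := by ring
          _ = ENNReal.ofReal (2 * (1 + γ ^ 2 * pmax / pmin)) * ∫⁻ z, F z ∂μ := by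
              congr 1
              rw [← ENNReal.ofReal_inv_of_pos hpmin,
                ← ENNReal.ofReal_mul (by positivity : (0:ℝ) ≤ 2 * γ ^ 2),
                ← ENNReal.ofReal_mul (mul_nonneg (by positivity) hpmax),
                ← ENNReal.ofReal_add (by norm_num)
                  (mul_nonneg (mul_nonneg (by positivity) hpmax) (inv_nonneg.2 hpmin.le))]
              congr 1
              field_simp
end
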